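/- Let τ be a finite monadic vocabulary with |τ| = k, let T = {π₁,…,π_ℓ} be a set of τ-types, and let m₁ ≤ … ≤ m_r (r ≤ ℓ) be positive integers. Then there is an FO[τ] sentence χ of size at most 3·m_r + 6k·|T| − 2k such that for every τ-model M of size n ≥ m_r + 1 in which exactly the types of T are realized: M ⊨ χ iff for every i ∈ {1,…,r} at most m_i points of M realize π_i. -/

import Mathlib

/-!
Common definitions: unary (monadic) first-order structures, FO[τ] formulas in
negation normal form, formula size / quantifier rank / number of quantifiers,
semantics, description complexity, the equivalence `≡_d`, and the entropies.
-/

open Filter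

/-- A `τ`-model of size `n`: each point of the domain `{1,…,n}` (modelled as `Fin n`)
is assigned its `τ`-type, i.e. the set of unary predicates of `τ` that hold at it.
This is exactly the data of a structure `(M, P₁^M, …, P_k^M)` with `P_i^M ⊆ M`. -/
abbrev UModel (τ : Type) (n : ℕ) := Fin n → Set τ

/-- `|π|_M`: the number of points of `M` realizing the `τ`-type `π`. -/
noncomputable def typeCount {τ : Type} {n : ℕ} (M : UModel τ n) (π : Set τ) : ℕ :=
  Set.ncard {a : Fin n | M a = π}

/-- FO[τ] formulas in negation normal form: atomic formulas are `x = y`, `x ≠ y`,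
`P(x)` and `¬P(x)`; the connectives are `∧`, `∨` and the quantifiers `∃`, `∀`.
Variables are indexed by natural numbers. -/
inductive FO (τ : Type) : Type
  | eq : ℕ → ℕ → FO τ
  | ne : ℕ → ℕ → FO τ
  | pos : τ → ℕ → FO τ
  | npos : τ → ℕ → FO τ
  | and : FO τ → FO τ → FO τ
  | or : FO τ → FO τ → FO τ
  | ex : ℕ → FO τ → FO τ
  | all : ℕ → FO τ → FO τ

namespace FO

variable {τ : Type}

/-- The size of a formula: the number of atomic formulas, binary connectives
(`∧`, `∨`) and quantifiers occurring in it. -/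
def size : FO τ → ℕ
  | eq _ _ => 1
  | ne _ _ => 1
  | pos _ _ => 1
  | npos _ _ => 1
  | and φ ψ => φ.size + ψ.size + 1
  | or φ ψ => φ.size + ψ.size + 1
  | ex _ φ => φ.size + 1
  | all _ φ => φ.size + 1

/-- The quantifier rank: the maximum number of nested quantifiers. -/
def qrank : FO τ → ℕ
  | eq _ _ => 0
  | ne _ _ => 0
  | pos _ _ => 0
  | npos _ _ => 0
  | and φ ψ => max φ.qrank ψ.qrank
  | or φ ψ => max φ.qrank ψ.qrank
  | ex _ φ => φ.qrank + 1
  | all _ φ => φ.qrank + 1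

/-- The number of quantifier occurrences in a formula. -/
def qcount : FO τ → ℕ
  | eq _ _ => 0
  | ne _ _ => 0
  | pos _ _ => 0
  | npos _ _ => 0
  | and φ ψ => φ.qcount + ψ.qcount
  | or φ ψ => φ.qcount + ψ.qcount
  | ex _ φ => φ.qcount + 1
  | all _ φ => φ.qcount + 1

/-- The free variables of a formula. -/
def freeVars : FO τ → Finset ℕ
  | eq x y => {x, y}
  | ne x y => {x, y}
  | pos _ x => {x}
  | npos _ x => {x}
  | and φ ψ => φ.freeVars ∪ ψ.freeVars
  | or φ ψ => φ.freeVars ∪ ψ.freeVars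
  | ex x φ => φ.freeVars \ {x}
  | all x φ => φ.freeVars \ {x}

/-- A sentence is a formula with no free variables. -/
def IsSentence (φ : FO τ) : Prop := φ.freeVars = ∅

/-- Satisfaction of a formula in a model under a variable assignment. -/
def sat {n : ℕ} (M : UModel τ n) : (ℕ → Fin n) → FO τ → Prop
  | s, eq x y => s x = s y
  | s, ne x y => s x ≠ s y
  | s, pos P x => P ∈ M (s x)
  | s, npos P x => P ∉ M (s x)
  | s, and φ ψ => sat M s φ ∧ sat M s ψ
  | s, or φ ψ => sat M s φ ∨ sat M s ψ
  | s, ex x φ => ∃ a : Fin n, sat M (Function.update s x a) φ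
  | s, all x φ => ∀ a : Fin n, sat M (Function.update s x a) φ

end FO

/-- Truth of a formula in a model (for sentences, independent of the assignment). -/
def Sat {τ : Type} {n : ℕ} (M : UModel τ n) (φ : FO τ) : Prop :=
  ∀ s : ℕ → Fin n, FO.sat M s φ

/-- Two `τ`-models of size `n` are isomorphic iff every `τ`-type is realized by
the same number of points in both. -/
def Iso {τ : Type} {n : ℕ} (M M' : UModel τ n) : Prop :=
  ∀ π : Set τ, typeCount M π = typeCount M' π

/-- A sentence `φ` defines the model `M` (among `τ`-models of size `n`) if the
models of size `n` satisfying `φ` are exactly those isomorphic to `M`. -/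
def Defines {τ : Type} {n : ℕ} (φ : FO τ) (M : UModel τ n) : Prop :=
  ∀ M' : UModel τ n, Sat M' φ ↔ Iso M' M

/-- The description complexity `C(M)`: the size of the smallest FO[τ] sentence
defining `M` among `τ`-models of the same size. -/
noncomputable def descComp {τ : Type} {n : ℕ} (M : UModel τ n) : ℕ :=
  sInf {s : ℕ | ∃ φ : FO τ, φ.IsSentence ∧ Defines φ M ∧ φ.size = s}

/-- The constant `c_τ := 15|τ|·2^{|τ|}`. -/
def cTau (τ : Type) [Fintype τ] : ℕ := 15 * Fintype.card τ * 2 ^ Fintype.card τ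

/-- `M ≡_d M'`: every `τ`-type realized fewer than `d` times in one of the models
is realized exactly the same number of times in both; equivalently, the counts of
realizing points truncated at `d` coincide for all types. -/
def EquivD {τ : Type} {n : ℕ} (d : ℕ) (M M' : UModel τ n) : Prop :=
  ∀ π : Set τ, min (typeCount M π) d = min (typeCount M' π) d

/-- `φ` defines the `≡_d`-equivalence class of `M`: the size-`n` models satisfying
`φ` are exactly those `≡_d`-equivalent to `M`. -/
def DefinesD {τ : Type} {n : ℕ} (d : ℕ) (φ : FO τ) (M : UModel τ n) : Prop :=
  ∀ M' : UModel τ n, Sat M' φ ↔ EquivD d M' M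

/-- The `d`-description complexity `C_d(M)`: the size of the smallest FO_d[τ]
sentence (quantifier rank at most `d`) true exactly in the size-`n` models
`≡_d`-equivalent to `M`. -/
noncomputable def descCompD {τ : Type} {n : ℕ} (d : ℕ) (M : UModel τ n) : ℕ :=
  sInf {s : ℕ | ∃ φ : FO τ, φ.IsSentence ∧ φ.qrank ≤ d ∧ DefinesD d φ M ∧ φ.size = s}

/-- The Shannon entropy `H_S(M) = Σ_π −(|π|_M/n)·log₂(|π|_M/n)` (terms with
`|π|_M = 0` vanish, as `Real.logb 2 0 = 0`). -/
noncomputable def HS {τ : Type} [Fintype τ] {n : ℕ} (M : UModel τ n) : ℝ :=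
  ∑ π : Set τ, -((typeCount M π : ℝ) / n) * Real.logb 2 ((typeCount M π : ℝ) / n)

/-- The Boltzmann entropy `H_B(M)`: `log₂` of the number of `τ`-models with the
same domain that are isomorphic to `M`. -/
noncomputable def HB {τ : Type} {n : ℕ} (M : UModel τ n) : ℝ :=
  Real.logb 2 (Nat.card {M' : UModel τ n // Iso M' M})

/-- The Boltzmann entropy with respect to `≡_d`: `log₂` of the number of
`τ`-models with the same domain that are `≡_d`-equivalent to `M`. -/
noncomputable def HBd {τ : Type} {n : ℕ} (d : ℕ) (M : UModel τ n) : ℝ :=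
  Real.logb 2 (Nat.card {M' : UModel τ n // EquivD d M' M})


/-!
With `N = m_r`, the sentence is `∀ x₀ ∃ x₁ … ∃ x_{N-1} ∀ x_N μ`. The matrix `μ` runs through
`π₁, …, π_r`: at level `i` it offers the disjuncts `x_N = x_j` for `j` in the block
`[m_{i-1}, m_i)`, and once `x₀` realizes `π_i` it stops, demanding that `x_N` either not
realize `π_i` or equal one of the witnesses offered so far, i.e. one of `x₀, …, x_{m_i - 1}`.
Such witnesses exist iff at most `m_i` points realize `π_i`. Since the blocks are shared by all
levels, only `m_r` equalities occur, and letting `x₀` be its own first witness saves the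
quantifier that the size bound has no room for.
-/

namespace FO

variable {τ : Type}

def neg : FO τ → FO τ
  | eq x y => ne x y
  | ne x y => eq x y
  | pos P x => npos P x
  | npos P x => pos P x
  | and φ ψ => or φ.neg ψ.neg
  | or φ ψ => and φ.neg ψ.neg
  | ex x φ => all x φ.neg
  | all x φ => ex x φ.neg

@[simp] theorem size_neg (φ : FO τ) : φ.neg.size = φ.size := by
  induction φ <;> simp [neg, size, *]

@[simp] theorem freeVars_neg (φ : FO τ) : φ.neg.freeVars = φ.freeVars := by
  induction φ <;> simp [neg, freeVars, *]

theorem sat_neg {n : ℕ} (M : UModel τ n) (s : ℕ → Fin n) (φ : FO τ) :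
    sat M s φ.neg ↔ ¬ sat M s φ := by
  induction φ generalizing s <;>
    simp only [neg, sat, *, not_and_or, not_or, not_exists, not_forall, ne_eq, not_not]

theorem sat_foldr_ex {n : ℕ} (M : UModel τ n) (s : ℕ → Fin n) (vs : List ℕ) (φ : FO τ) :
    sat M s (vs.foldr ex φ) ↔ ∃ s' : ℕ → Fin n, (∀ v ∉ vs, s' v = s v) ∧ sat M s' φ := by
  induction vs generalizing s with
  | nil =>
    refine ⟨fun h => ⟨s, fun _ _ => rfl, h⟩, ?_⟩
    rintro ⟨s', hs', h⟩
    rwa [← funext fun v => hs' v List.not_mem_nil]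
  | cons v vs ih =>
    simp only [List.foldr_cons, sat, ih]
    constructor
    · rintro ⟨a, s', hs', h⟩
      refine ⟨s', fun w hw => ?_, h⟩
      rw [List.mem_cons, not_or] at hw
      rw [hs' w hw.2, Function.update_of_ne hw.1]
    · rintro ⟨s', hs', h⟩
      refine ⟨s' v, s', fun w hw => ?_, h⟩
      by_cases hwv : w = v
      · simp [hwv]
      · rw [Function.update_of_ne hwv]
        exact hs' w (by simp [hwv, hw])

@[simp] theorem size_foldr_ex (vs : List ℕ) (φ : FO τ) :
    (vs.foldr ex φ).size = vs.length + φ.size := by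
  induction vs with
  | nil => simp
  | cons v vs ih => simp only [List.foldr_cons, size, ih, List.length_cons]; omega

@[simp] theorem freeVars_foldr_ex (vs : List ℕ) (φ : FO τ) :
    (vs.foldr ex φ).freeVars = φ.freeVars \ vs.toFinset := by
  induction vs with
  | nil => simp
  | cons v vs ih =>
    ext w
    simp only [List.foldr_cons, freeVars, ih, Finset.mem_sdiff, List.mem_toFinset,
      Finset.mem_singleton, List.toFinset_cons, Finset.mem_insert, not_or]
    tauto

def disjEqs (z : ℕ) (js : List ℕ) (φ : FO τ) : FO τ :=
  js.foldr (fun j ψ => or (eq z j) ψ) φ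

theorem sat_disjEqs {n : ℕ} (M : UModel τ n) (s : ℕ → Fin n) (z : ℕ) (js : List ℕ)
    (φ : FO τ) : sat M s (disjEqs z js φ) ↔ (∃ j ∈ js, s z = s j) ∨ sat M s φ := by
  induction js with
  | nil => simp [disjEqs]
  | cons j js ih =>
    simp only [disjEqs, List.foldr_cons, sat] at ih ⊢
    rw [ih]
    simp [or_assoc]

theorem sat_disjEqs_range' {n : ℕ} (M : UModel τ n) (s : ℕ → Fin n) (z lo e : ℕ)
    (φ : FO τ) : sat M s (disjEqs z (List.range' lo (e - lo)) φ) ↔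
      (∃ j, lo ≤ j ∧ j < e ∧ s z = s j) ∨ sat M s φ := by
  rw [sat_disjEqs]
  refine or_congr_left ⟨?_, ?_⟩
  · rintro ⟨j, hj, hjz⟩
    rw [List.mem_range'_1] at hj
    exact ⟨j, hj.1, by omega, hjz⟩
  · rintro ⟨j, hlj, hje, hjz⟩
    exact ⟨j, List.mem_range'_1.2 ⟨hlj, by omega⟩, hjz⟩

@[simp] theorem size_disjEqs (z : ℕ) (js : List ℕ) (φ : FO τ) :
    (disjEqs z js φ).size = 2 * js.length + φ.size := by
  induction js with
  | nil => simp [disjEqs]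
  | cons j js ih =>
    simp only [disjEqs, List.foldr_cons, size, List.length_cons] at ih ⊢
    rw [ih]
    omega

theorem mem_freeVars_disjEqs {z : ℕ} {js : List ℕ} {φ : FO τ} {v : ℕ}
    (hv : v ∈ (disjEqs z js φ).freeVars) : v = z ∨ v ∈ js ∨ v ∈ φ.freeVars := by
  induction js with
  | nil => exact Or.inr (Or.inr (by simpa [disjEqs] using hv))
  | cons j js ih =>
    simp only [disjEqs, List.foldr_cons, freeVars, Finset.mem_union, Finset.mem_insert,
      Finset.mem_singleton] at hv ih
    rcases hv with (h | h) | h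
    · exact Or.inl h
    · simp [h]
    · rcases ih h with h | h | h <;> simp [h]

open Classical in
noncomputable def literal (σ : Set τ) (v : ℕ) (P : τ) : FO τ :=
  if P ∈ σ then pos P v else npos P v

noncomputable def typeFormula (σ : Set τ) (v : ℕ) : List τ → FO τ
  | [] => eq v v
  | P :: Ps => Ps.foldr (fun Q φ => and (literal σ v Q) φ) (literal σ v P)

theorem sat_literal {n : ℕ} (M : UModel τ n) (s : ℕ → Fin n) (σ : Set τ) (v : ℕ) (P : τ) :
    sat M s (literal σ v P) ↔ (P ∈ M (s v) ↔ P ∈ σ) := by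
  unfold literal
  split_ifs with h <;> simp [sat, h]

theorem sat_typeFormula {n : ℕ} (M : UModel τ n) (s : ℕ → Fin n) (σ : Set τ) (v : ℕ)
    (Ps : List τ) : sat M s (typeFormula σ v Ps) ↔ ∀ P ∈ Ps, (P ∈ M (s v) ↔ P ∈ σ) := by
  rcases Ps with _ | ⟨P, Ps⟩
  · simp [typeFormula, sat]
  · induction Ps with
    | nil => simp [typeFormula, sat_literal]
    | cons Q Ps ih =>
      simp only [typeFormula, List.foldr_cons, sat, sat_literal] at ih ⊢
      rw [ih]
      simp only [List.mem_cons, forall_eq_or_imp]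
      tauto

theorem sat_typeFormula_univ [Fintype τ] {n : ℕ} (M : UModel τ n) (s : ℕ → Fin n)
    (σ : Set τ) (v : ℕ) : sat M s (typeFormula σ v Finset.univ.toList) ↔ M (s v) = σ := by
  simp [sat_typeFormula, Set.ext_iff]

theorem size_typeFormula (σ : Set τ) (v : ℕ) {Ps : List τ} (hPs : Ps ≠ []) :
    (typeFormula σ v Ps).size = 2 * Ps.length - 1 := by
  rcases Ps with _ | ⟨P, Ps⟩
  · exact absurd rfl hPs
  · induction Ps with
    | nil =>
      simp only [typeFormula, List.foldr_nil]
      unfold literal; split_ifs <;> rfl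
    | cons Q Ps ih =>
      simp only [typeFormula, List.foldr_cons, size, List.length_cons] at ih ⊢
      rw [ih (List.cons_ne_nil _ _)]
      unfold literal; split_ifs <;> simp only [size] <;> omega

theorem freeVars_typeFormula (σ : Set τ) (v : ℕ) (Ps : List τ) :
    (typeFormula σ v Ps).freeVars ⊆ {v} := by
  rcases Ps with _ | ⟨P, Ps⟩
  · simp [typeFormula, freeVars]
  · induction Ps with
    | nil =>
      simp only [typeFormula, List.foldr_nil]
      unfold literal; split_ifs <;> simp [freeVars]
    | cons Q Ps ih =>
      simp only [typeFormula, List.foldr_cons, freeVars] at ih ⊢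
      refine Finset.union_subset ?_ ih
      unfold literal; split_ifs <;> simp [freeVars]

end FO

theorem Set.ncard_le_of_forall_exists_lt {α : Type*} {S : Set α} {c : ℕ} (y : ℕ → α)
    (h : ∀ b ∈ S, ∃ j < c, y j = b) : S.ncard ≤ c :=
  calc S.ncard ≤ (y '' Set.Iio c).ncard :=
        Set.ncard_le_ncard (fun b hb => h b hb) ((Set.finite_Iio c).image y)
    _ ≤ (Set.Iio c).ncard := Set.ncard_image_le (Set.finite_Iio c)
    _ = c := by simp

theorem Set.Finite.exists_enum_of_ncard_le {α : Type*} {S : Set α} (hS : S.Finite) {a : α}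
    (ha : a ∈ S) {c : ℕ} (hc : S.ncard ≤ c) :
    ∃ y : ℕ → α, y 0 = a ∧ ∀ b ∈ S, ∃ j < c, y j = b := by
  classical
  set l := a :: (hS.toFinset.erase a).toList
  have hlen : l.length = S.ncard := by
    rw [List.length_cons, Finset.length_toList, Finset.card_erase_of_mem (by simpa using ha),
      Set.ncard_eq_toFinset_card S hS, Nat.sub_add_cancel]
    exact Finset.card_pos.2 ⟨a, by simpa using ha⟩
  refine ⟨fun j => l.getD j a, rfl, fun b hb => ?_⟩
  have hbl : b ∈ l := by
    by_cases hba : b = a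
    · simp [l, hba]
    · simp [l, hba, hb]
  obtain ⟨j, hj, rfl⟩ := List.mem_iff_getElem.1 hbl
  exact ⟨j, by omega, List.getD_eq_getElem _ _ hj⟩

section AtMost

variable {τ : Type} (θ : Set τ → ℕ → FO τ) (x z : ℕ)

/-- Each entry `(σ, e)` of the list is a level; the level's block of witness variables
is `[lo, e)`, where `lo` is the bound of the previous level. -/
def atMostMatrix : ℕ → List (Set τ × ℕ) → FO τ
  | _, [] => .eq x x
  | lo, [(σ, e)] => FO.disjEqs z (List.range' lo (e - lo)) (.or (θ σ x).neg (θ σ z).neg)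
  | lo, (σ, e) :: b :: L => FO.disjEqs z (List.range' lo (e - lo))
      (.or (.and (θ σ x) (θ σ z).neg) (.and (θ σ x).neg (atMostMatrix e (b :: L))))

theorem sat_atMostMatrix {n : ℕ} (M : UModel τ n)
    (hθ : ∀ s σ v, FO.sat M s (θ σ v) ↔ M (s v) = σ) (s : ℕ → Fin n) (lo : ℕ)
    (L : List (Set τ × ℕ)) (hnodup : (L.map Prod.fst).Nodup)
    (hsorted : L.Pairwise fun p q => p.2 ≤ q.2) (hlo : ∀ p ∈ L, lo ≤ p.2) :
    FO.sat M s (atMostMatrix θ x z lo L) ↔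
      ∀ p ∈ L, M (s x) = p.1 → M (s z) = p.1 → ∃ j, lo ≤ j ∧ j < p.2 ∧ s z = s j := by
  induction lo, L using atMostMatrix.induct with
  | case1 => simp [atMostMatrix, FO.sat]
  | case2 lo σ e =>
    simp only [atMostMatrix, FO.sat_disjEqs_range', FO.sat, FO.sat_neg, hθ,
      List.mem_singleton, forall_eq]
    by_cases hx : M (s x) = σ <;> by_cases hz : M (s z) = σ <;> simp [hx, hz]
  | case3 lo σ e b L ih =>
    rw [List.map_cons, List.nodup_cons] at hnodup
    rw [List.pairwise_cons] at hsorted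
    dsimp only at hnodup hsorted
    simp only [atMostMatrix, FO.sat_disjEqs_range', FO.sat, FO.sat_neg, hθ,
      ih hnodup.2 hsorted.2 hsorted.1, List.forall_mem_cons (l := b :: L)]
    have hle : lo ≤ e := hlo _ List.mem_cons_self
    constructor
    · rintro (⟨j, hlj, hje, hj⟩ | ⟨hx, hz⟩ | ⟨hx, hrest⟩)
      · exact ⟨fun _ _ => ⟨j, hlj, hje, hj⟩,
          fun p hp _ _ => ⟨j, hlj, hje.trans_le (hsorted.1 p hp), hj⟩⟩
      · -- `x` realizes `σ`, hence none of the later types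
        refine ⟨fun _ h => absurd h hz, fun p hp hpx _ => (hnodup.1 ?_).elim⟩
        rw [← hx, hpx]
        exact List.mem_map_of_mem (f := Prod.fst) hp
      · refine ⟨fun h => absurd h hx, fun p hp hpx hpz => ?_⟩
        obtain ⟨j, hj1, hj2, hj⟩ := hrest p hp hpx hpz
        exact ⟨j, hle.trans hj1, hj2, hj⟩
    · rintro ⟨hfirst, hrest⟩
      by_cases hblock : ∃ j, lo ≤ j ∧ j < e ∧ s z = s j
      · exact Or.inl hblock
      by_cases hx : M (s x) = σ
      · exact Or.inr (Or.inl ⟨hx, fun hz => hblock (hfirst hx hz)⟩)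
      · refine Or.inr (Or.inr ⟨hx, fun p hp hpx hpz => ?_⟩)
        obtain ⟨j, hj1, hj2, hj⟩ := hrest p hp hpx hpz
        exact ⟨j, not_lt.1 fun hje => hblock ⟨j, hj1, hje, hj⟩, hj2, hj⟩

theorem size_atMostMatrix {t N : ℕ} (hθ : ∀ σ v, (θ σ v).size = t) (lo : ℕ)
    (L : List (Set τ × ℕ)) (hL : L ≠ []) (hsorted : L.Pairwise fun p q => p.2 ≤ q.2)
    (hlo : ∀ p ∈ L, lo ≤ p.2) (hN : ∀ p ∈ L, p.2 ≤ N) :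
    (atMostMatrix θ x z lo L).size + t + 2 ≤ 2 * (N - lo) + 3 * (t + 1) * L.length := by
  induction lo, L using atMostMatrix.induct with
  | case1 => exact absurd rfl hL
  | case2 lo σ e =>
    have := hlo _ List.mem_cons_self
    have := hN _ List.mem_cons_self
    simp only [atMostMatrix, FO.size_disjEqs, FO.size, FO.size_neg, hθ, List.length_range',
      List.length_singleton]
    omega
  | case3 lo σ e b L ih =>
    rw [List.pairwise_cons] at hsorted
    have hrec := ih (List.cons_ne_nil _ _) hsorted.2 hsorted.1 fun p hp => hN p (.tail _ hp)
    have := hlo _ List.mem_cons_self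
    have := hN _ List.mem_cons_self
    simp only [atMostMatrix, FO.size_disjEqs, FO.size, FO.size_neg, hθ, List.length_range',
      List.length_cons (a := (σ, e))]
    rw [Nat.mul_succ]
    omega

theorem mem_freeVars_atMostMatrix {N : ℕ} (hθ : ∀ σ v, (θ σ v).freeVars ⊆ {v}) (lo : ℕ)
    (L : List (Set τ × ℕ)) (hN : ∀ p ∈ L, p.2 ≤ N) {v : ℕ}
    (hv : v ∈ (atMostMatrix θ x z lo L).freeVars) : v = x ∨ v = z ∨ v < N := by
  have hθ' : ∀ σ w, v ∈ (θ σ w).freeVars → v = w := fun σ w h => by simpa using hθ σ w h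
  induction lo, L using atMostMatrix.induct with
  | case1 => simp_all [atMostMatrix, FO.freeVars]
  | case2 lo σ e =>
    have := hN _ List.mem_cons_self
    rcases FO.mem_freeVars_disjEqs hv with h | h | h
    · exact Or.inr (Or.inl h)
    · rw [List.mem_range'_1] at h; omega
    · simp only [FO.freeVars, FO.freeVars_neg, Finset.mem_union] at h
      rcases h with h | h
      · exact Or.inl (hθ' _ _ h)
      · exact Or.inr (Or.inl (hθ' _ _ h))
  | case3 lo σ e b L ih =>
    have := hN _ List.mem_cons_self
    rcases FO.mem_freeVars_disjEqs hv with h | h | h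
    · exact Or.inr (Or.inl h)
    · rw [List.mem_range'_1] at h; omega
    · simp only [FO.freeVars, FO.freeVars_neg, Finset.mem_union] at h
      rcases h with (h | h) | (h | h)
      · exact Or.inl (hθ' _ _ h)
      · exact Or.inr (Or.inl (hθ' _ _ h))
      · exact Or.inl (hθ' _ _ h)
      · exact ih (fun p hp => hN p (.tail _ hp)) h

def atMostSentence (N : ℕ) (L : List (Set τ × ℕ)) : FO τ :=
  .all 0 ((List.range' 1 (N - 1)).foldr .ex (.all N (atMostMatrix θ 0 N 0 L)))

theorem isSentence_atMostSentence (hθ : ∀ σ v, (θ σ v).freeVars ⊆ {v}) {N : ℕ} (hN : 1 ≤ N)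
    (L : List (Set τ × ℕ)) (hL : ∀ p ∈ L, p.2 ≤ N) : (atMostSentence θ N L).IsSentence := by
  rw [FO.IsSentence, Finset.eq_empty_iff_forall_notMem]
  intro v hv
  simp only [atMostSentence, FO.freeVars, FO.freeVars_foldr_ex, Finset.mem_sdiff,
    Finset.mem_singleton, List.mem_toFinset, List.mem_range'_1] at hv
  have := mem_freeVars_atMostMatrix θ 0 N hθ 0 L hL hv.1.1.1
  omega

theorem size_atMostSentence {t : ℕ} (hθ : ∀ σ v, (θ σ v).size = t) {N : ℕ} (hN : 1 ≤ N)
    (L : List (Set τ × ℕ)) (hL : L ≠ []) (hsorted : L.Pairwise fun p q => p.2 ≤ q.2)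
    (hLN : ∀ p ∈ L, p.2 ≤ N) :
    (atMostSentence θ N L).size + t + 1 ≤ 3 * N + 3 * (t + 1) * L.length := by
  have := size_atMostMatrix θ 0 N hθ 0 L hL hsorted (fun _ _ => Nat.zero_le _) hLN
  simp only [atMostSentence, FO.size, FO.size_foldr_ex, List.length_range']
  omega

theorem sat_atMostSentence_iff_exists_enum {n : ℕ} (M : UModel τ n)
    (hθ : ∀ s σ v, FO.sat M s (θ σ v) ↔ M (s v) = σ) {N : ℕ} (hN : 1 ≤ N)
    (L : List (Set τ × ℕ)) (hnodup : (L.map Prod.fst).Nodup)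
    (hsorted : L.Pairwise fun p q => p.2 ≤ q.2) (hLN : ∀ p ∈ L, p.2 ≤ N) :
    Sat M (atMostSentence θ N L) ↔ ∀ a, ∃ y : ℕ → Fin n, y 0 = a ∧
      ∀ p ∈ L, M a = p.1 → ∀ b, M b = p.1 → ∃ j < p.2, y j = b := by
  simp only [Sat, atMostSentence, FO.sat, FO.sat_foldr_ex,
    sat_atMostMatrix θ 0 N M hθ _ 0 L hnodup hsorted (fun _ _ => Nat.zero_le _),
    List.mem_range'_1, Function.update_self]
  constructor
  · intro h a
    obtain ⟨y, hy, hsat⟩ := h (fun _ => a) a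
    have hy0 : y 0 = a := by simpa using hy 0 (by omega)
    refine ⟨y, hy0, fun p hp hpa b hb => ?_⟩
    rw [← hy0, ← Function.update_of_ne (by omega : 0 ≠ N) b y] at hpa
    obtain ⟨j, -, hj, hjb⟩ := hsat b p hp hpa hb
    rw [Function.update_of_ne (by have := hLN p hp; omega)] at hjb
    exact ⟨j, hj, hjb.symm⟩
  · intro h s a
    obtain ⟨y, hy0, hy⟩ := h a
    refine ⟨fun v => if v < N then y v else s v, fun v hv => ?_, fun b p hp hpa hb => ?_⟩
    · rcases Nat.eq_zero_or_pos v with rfl | hv0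
      · simp [show 0 < N by omega, hy0]
      · simp [show ¬ v < N by omega, Function.update_of_ne hv0.ne']
    · rw [Function.update_of_ne (by omega : 0 ≠ N)] at hpa
      rw [if_pos (show 0 < N by omega), hy0] at hpa
      obtain ⟨j, hj, rfl⟩ := hy p hp hpa b hb
      have := hLN p hp
      refine ⟨j, Nat.zero_le _, hj, ?_⟩
      rw [Function.update_of_ne (by omega), if_pos (by omega)]

theorem sat_atMostSentence_iff {n : ℕ} (M : UModel τ n)
    (hθ : ∀ s σ v, FO.sat M s (θ σ v) ↔ M (s v) = σ) {N : ℕ} (hN : 1 ≤ N)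
    (L : List (Set τ × ℕ)) (hnodup : (L.map Prod.fst).Nodup)
    (hsorted : L.Pairwise fun p q => p.2 ≤ q.2) (hLN : ∀ p ∈ L, p.2 ≤ N) :
    Sat M (atMostSentence θ N L) ↔ ∀ p ∈ L, typeCount M p.1 ≤ p.2 := by
  rw [sat_atMostSentence_iff_exists_enum θ M hθ hN L hnodup hsorted hLN]
  constructor
  · intro h p hp
    by_cases hS : ∃ a, M a = p.1
    · obtain ⟨a, ha⟩ := hS
      obtain ⟨y, -, hy⟩ := h a
      exact Set.ncard_le_of_forall_exists_lt y (hy p hp ha)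
    · push Not at hS
      simp [typeCount, hS]
  · intro h a
    by_cases hS : ∃ p ∈ L, M a = p.1
    · obtain ⟨p, hp, hpa⟩ := hS
      obtain ⟨y, hy0, hy⟩ :=
        (Set.toFinite {b | M b = p.1}).exists_enum_of_ncard_le hpa (h p hp)
      refine ⟨y, hy0, fun q hq hqa => ?_⟩
      obtain rfl : q = p := List.inj_on_of_nodup_map hnodup hq hp (hqa.symm.trans hpa)
      exact hy
    · push Not at hS
      exact ⟨fun _ => a, rfl, fun p hp hpa => absurd hpa (hS p hp)⟩

end AtMost

theorem size_atMostSentence_typeFormula {τ : Type} [Fintype τ] (hk : 0 < Fintype.card τ)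
    {N : ℕ} (hN : 1 ≤ N) (L : List (Set τ × ℕ)) (hL : L ≠ [])
    (hsorted : L.Pairwise fun p q => p.2 ≤ q.2) (hLN : ∀ p ∈ L, p.2 ≤ N) :
    (atMostSentence (fun σ v => FO.typeFormula σ v Finset.univ.toList) N L).size
      + 2 * Fintype.card τ ≤ 3 * N + 6 * Fintype.card τ * L.length := by
  have hsize (σ : Set τ) (v : ℕ) := FO.size_typeFormula σ v (Ps := Finset.univ.toList)
    (List.ne_nil_of_length_pos (by simpa using hk))
  have := size_atMostSentence _ hsize hN L hL hsorted hLN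
  have h6 : 3 * (2 * Fintype.card τ - 1 + 1) * L.length = 6 * Fintype.card τ * L.length := by
    rw [Nat.sub_add_cancel (by omega)]; ring
  rw [Finset.length_toList, Finset.card_univ, h6] at this
  omega

theorem typeCount_eq_of_isEmpty {τ : Type} [IsEmpty τ] {n : ℕ} (M : UModel τ n) (σ : Set τ) :
    typeCount M σ = n := by
  simp [typeCount, Subsingleton.elim _ σ]

/-- Let `|τ| = k`, let `π 0, …, π (ℓ-1)` enumerate a set `T` of `ℓ`
distinct `τ`-types, and let `m 0 ≤ … ≤ m (r-1)` (`1 ≤ r ≤ ℓ`) be positive integers. Then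
there is an FO[τ] sentence `χ` of size at most `3·m_r + 6k·ℓ − 2k` such that for every
`τ`-model `M` of size `n ≥ m_r + 1` in which exactly the types of `T` are realized:
`M ⊨ χ` iff for every `i`, at most `m i` points of `M` realize `π i`. -/
theorem at_most_formula (τ : Type) [Fintype τ] {ℓ r : ℕ} (hr : 1 ≤ r) (hrℓ : r ≤ ℓ)
    (π : Fin ℓ → Set τ) (hinj : Function.Injective π)
    (m : Fin r → ℕ) (hpos : ∀ i, 1 ≤ m i) (hasc : Monotone m) :
    ∃ χ : FO τ, χ.IsSentence ∧
      χ.size ≤ 3 * m ⟨r - 1, by omega⟩ + 6 * Fintype.card τ * ℓ - 2 * Fintype.card τ ∧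
      ∀ (n : ℕ) (M : UModel τ n), m ⟨r - 1, by omega⟩ + 1 ≤ n →
        (∀ σ : Set τ, 0 < typeCount M σ ↔ ∃ j, σ = π j) →
        (Sat M χ ↔ ∀ i : Fin r, typeCount M (π (Fin.castLE hrℓ i)) ≤ m i) := by
  have hN := hpos ⟨r - 1, by omega⟩
  by_cases hk : Fintype.card τ = 0
  · have : IsEmpty τ := Fintype.card_eq_zero_iff.1 hk
    -- every point realizes the unique type, so the right-hand side fails and `⊥` will do
    refine ⟨.all 0 (.ne 0 0), by simp [FO.IsSentence, FO.freeVars], by simp [FO.size]; omega,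
      fun n M hn _ => iff_of_false (fun h => h (fun _ => ⟨0, by omega⟩) ⟨0, by omega⟩ rfl) ?_⟩
    exact fun h => by have := h ⟨r - 1, by omega⟩; rw [typeCount_eq_of_isEmpty] at this; omega
  set L := (List.finRange r).map fun i => (π (Fin.castLE hrℓ i), m i)
  have hLlen : L.length = r := by simp [L]
  have hnodup : (L.map Prod.fst).Nodup := by
    rw [List.map_map]
    exact (List.nodup_finRange r).map (hinj.comp (Fin.castLE_injective hrℓ))
  have hsorted : L.Pairwise fun p q => p.2 ≤ q.2 :=
    List.pairwise_map.2 ((List.pairwise_lt_finRange r).imp fun h => hasc h.le)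
  have hLN : ∀ p ∈ L, p.2 ≤ m ⟨r - 1, by omega⟩ := by
    simp only [L, List.forall_mem_map, List.mem_finRange, forall_const]
    exact fun i => hasc (Fin.mk_le_mk.2 (by omega))
  refine ⟨atMostSentence (fun σ v => FO.typeFormula σ v Finset.univ.toList)
      (m ⟨r - 1, by omega⟩) L,
    isSentence_atMostSentence _ (fun σ v => FO.freeVars_typeFormula σ v _) hN L hLN, ?_,
    fun n M _ _ => ?_⟩
  · have := size_atMostSentence_typeFormula (Nat.pos_of_ne_zero hk) hN L
      (List.ne_nil_of_length_pos (by omega)) hsorted hLN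
    have := Nat.mul_le_mul_left (6 * Fintype.card τ) hrℓ
    rw [hLlen] at *
    omega
  · rw [sat_atMostSentence_iff _ M (fun s σ v => FO.sat_typeFormula_univ M s σ v) hN L
      hnodup hsorted hLN]
    simp [L]
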